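/- arXiv:2507.23420 — 2 statements merged into one kernel-verified Lean document; each statement's English description precedes it below -/
import Mathlib

section
/- Let G be a 3-regular simple graph in which any two adjacent vertices have exactly 2 common neighbours. Then every connected component of G is a complete graph K₄; in particular, the number of vertices of G is divisible by 4. -/
section aux
variable {V : Type*} [Fintype V] [DecidableEq V] (G : SimpleGraph V) [DecidableRel G.Adj]

lemma stmt13_L1 (hreg : G.IsRegularOfDegree 3)
    (hadj : ∀ v w, G.Adj v w → Fintype.card (G.commonNeighbors v w) = 2)
    {v w x : V} (hvw : G.Adj v w) (hvx : G.Adj v x) (hxw : x ≠ w) : G.Adj w x := by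
  classical
  set s : Finset V := G.neighborFinset v \ {w} with hs
  have hcard : s.card = 2 := by
    rw [hs, Finset.card_sdiff_of_subset (by simpa using hvw)]
    simp [hreg v]
  have hsub : (G.commonNeighbors v w).toFinset ⊆ s := by
    intro y hy
    rw [Set.mem_toFinset] at hy
    obtain ⟨h1, h2⟩ := hy
    simp only [hs, Finset.mem_sdiff, SimpleGraph.mem_neighborFinset, Finset.mem_singleton]
    exact ⟨h1, fun h => G.irrefl (h ▸ h2)⟩
  have heq : (G.commonNeighbors v w).toFinset = s := by
    apply Finset.eq_of_subset_of_card_le hsub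
    rw [Set.toFinset_card, hadj v w hvw, hcard]
  have hx : x ∈ s := by simp [hs, hvx, hxw]
  rw [← heq, Set.mem_toFinset] at hx
  exact hx.2

lemma stmt13_L2 (hreg : G.IsRegularOfDegree 3)
    (hadj : ∀ v w, G.Adj v w → Fintype.card (G.commonNeighbors v w) = 2)
    {v u : V} (h : G.Reachable v u) : u = v ∨ G.Adj v u := by
  obtain ⟨p⟩ := h
  have key : ∀ ⦃w u : V⦄, G.Walk w u → (w = v ∨ G.Adj v w) → (u = v ∨ G.Adj v u) := by
    intro w u p
    induction p with
    | nil => exact id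
    | @cons a b c h p ih =>
      intro hw
      apply ih
      rcases hw with rfl | hw
      · by_cases hb : b = a
        · exact Or.inl hb
        · exact Or.inr h
      · by_cases hb : b = v
        · exact Or.inl hb
        · exact Or.inr (stmt13_L1 G hreg hadj hw.symm h hb)
  exact key p (Or.inl rfl)
end aux

/-- If G is a 3-regular simple graph in which any two adjacent vertices have exactly
2 common neighbours, then every connected component of G is a complete graph K₄, and
the number of vertices of G is divisible by 4. -/
theorem stmt_13 {V : Type*} [Fintype V] [DecidableEq V] (G : SimpleGraph V)
    [DecidableRel G.Adj]
    (hreg : G.IsRegularOfDegree 3)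
    (hadj : ∀ v w, G.Adj v w → Fintype.card (G.commonNeighbors v w) = 2) :
    (∀ K : G.ConnectedComponent,
      Nonempty (G.induce K.supp ≃g (⊤ : SimpleGraph (Fin 4)))) ∧
    4 ∣ Fintype.card V := by
  classical
  have main : ∀ K : G.ConnectedComponent,
      Nonempty (G.induce K.supp ≃g (⊤ : SimpleGraph (Fin 4))) := by
    intro K
    obtain ⟨v, hv0⟩ := K.exists_rep
    have hv : G.connectedComponentMk v = K := hv0
    have hsupp : K.supp = ↑(insert v (G.neighborFinset v) : Finset V) := by
      ext u
      simp only [SimpleGraph.ConnectedComponent.mem_supp_iff, Finset.coe_insert,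
        Set.mem_insert_iff, Finset.mem_coe, SimpleGraph.mem_neighborFinset]
      rw [← hv, SimpleGraph.ConnectedComponent.eq]
      constructor
      · intro h
        exact stmt13_L2 G hreg hadj h.symm
      · intro h
        rcases h with rfl | h
        · exact SimpleGraph.Reachable.refl _
        · exact h.symm.reachable
    have hclique : ∀ a b : V, a ∈ K.supp → b ∈ K.supp → a ≠ b → G.Adj a b := by
      intro a b ha hb hab
      rw [hsupp] at ha hb
      simp only [Finset.coe_insert, Set.mem_insert_iff, Finset.mem_coe,
        SimpleGraph.mem_neighborFinset] at ha hb
      rcases ha with rfl | ha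
      · rcases hb with rfl | hb
        · exact absurd rfl hab
        · exact hb
      · rcases hb with rfl | hb
        · exact ha.symm
        · exact stmt13_L1 G hreg hadj ha hb (Ne.symm hab)
    have hcard4 : Fintype.card ↥K.supp = 4 := by
      rw [Fintype.card_congr (Equiv.setCongr hsupp), ← Set.toFinset_card, Finset.toFinset_coe,
        Finset.card_insert_of_notMem (by simp), SimpleGraph.card_neighborFinset_eq_degree, hreg v]
    obtain ⟨e⟩ : Nonempty (↥K.supp ≃ Fin 4) := by
      rw [← Fintype.card_eq, hcard4, Fintype.card_fin]
    refine ⟨⟨e, ?_⟩⟩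
    intro a b
    simp only [SimpleGraph.top_adj, ne_eq, SimpleGraph.comap_adj,
      Function.Embedding.coe_subtype]
    constructor
    · intro h
      exact hclique ↑a ↑b a.2 b.2 (fun hh => h (congrArg e (Subtype.ext hh)))
    · intro h hh
      exact h.ne (congrArg Subtype.val (e.injective hh))
  refine ⟨main, ?_⟩
  letI : Fintype G.ConnectedComponent := Fintype.ofFinite _
  have hcards : ∀ K : G.ConnectedComponent, Fintype.card ↥K.supp = 4 := by
    intro K
    obtain ⟨e⟩ := main K
    rw [Fintype.card_congr e.toEquiv, Fintype.card_fin]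
  have hsum : Fintype.card V
      = ∑ K : G.ConnectedComponent,
          (Finset.univ.filter fun v => G.connectedComponentMk v = K).card := by
    rw [← Finset.card_univ]
    exact Finset.card_eq_sum_card_fiberwise (fun v _ => Finset.mem_univ _)
  have hfib : ∀ K : G.ConnectedComponent,
      (Finset.univ.filter fun v => G.connectedComponentMk v = K).card = 4 := by
    intro K
    rw [← Fintype.card_subtype]
    rw [← hcards K]
    exact Fintype.card_congr (Equiv.subtypeEquivRight (fun v => Iff.rfl))
  rw [hsum]
  simp only [hfib]
  simp [Finset.sum_const, mul_comm]
end

section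
/- There is no signed graph Ġ that is 5-regular, 1 net-regular, and strongly regular with parameters of the form (n, 5, 1, 1, c) or (n, 5, 1, -2, c) for any integer c and even n: the relation c(6 - n) = 4 + 3a + 2b forces c(6 - n) = 9 (resp. 3), which requires n to be odd, contradicting that a 5-regular graph must have an even number of vertices. -/
/-- There is no 5-regular, 1 net-regular strongly regular signed graph with
parameters (n, 5, 1, 1, c) or (n, 5, 1, -2, c). -/
theorem stmt_17 {n : ℕ} (A AG : Matrix (Fin n) (Fin n) ℤ) (a b c : ℤ)
    (hsymm : A.IsSymm)
    (hentries : ∀ i j, A i j = -1 ∨ A i j = 0 ∨ A i j = 1)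
    (hdiag : ∀ i, A i i = 0)
    (hAG : ∀ i j, AG i j = |A i j|)
    (hreg : ∀ i, ∑ j, AG i j = 5)
    (hnet : ∀ i, ∑ j, A i j = 1)
    (hnonedgeless : ∃ i j, A i j ≠ 0)
    (hab : (a = 1 ∧ b = 1) ∨ (a = 1 ∧ b = -2))
    (heq : 2 • A ^ 2 + (b - a) • A =
      (a + b - 2 * c) • AG + (2 * c) • (Matrix.of fun _ _ => (1 : ℤ)) +
        (2 * (5 - c)) • (1 : Matrix (Fin n) (Fin n) ℤ)) :
    False := by
  obtain ⟨i0, j0, hij0⟩ := hnonedgeless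
  -- n is even (handshake lemma)
  have hAGsymm : ∀ i j, AG i j = AG j i := by
    intro i j
    rw [hAG, hAG, ← hsymm.apply i j]
  have hAGdiag : ∀ i, AG i i = 0 := by
    intro i; rw [hAG, hdiag, abs_zero]
  have hpar0 : ∑ p : Fin n × Fin n, ((AG p.1 p.2 : ZMod 2)) = 0 := by
    apply Finset.sum_ninvolution Prod.swap
    · intro p
      show (AG p.1 p.2 : ZMod 2) + (AG p.2 p.1 : ZMod 2) = 0
      rw [hAGsymm p.2 p.1, ← two_mul]
      exact mul_eq_zero_of_left (by decide) _
    · intro p hp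
      intro hsw
      apply hp
      have h1 : p.2 = p.1 := congrArg Prod.fst hsw
      rw [h1, hAGdiag]
      simp
    · intro p; exact Finset.mem_univ _
    · intro p; exact Prod.swap_swap p
  have hpar1 : ∑ p : Fin n × Fin n, ((AG p.1 p.2 : ZMod 2)) = (n : ZMod 2) := by
    rw [Fintype.sum_prod_type]
    have : ∀ i : Fin n, ∑ j, ((AG i j : ZMod 2)) = 1 := by
      intro i
      have := hreg i
      have : ((∑ j, AG i j : ℤ) : ZMod 2) = ((5 : ℤ) : ZMod 2) := by rw [this]
      rw [Int.cast_sum] at this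
      rw [this]; decide
    simp only [this, Finset.sum_const, Finset.card_univ, Fintype.card_fin, nsmul_eq_mul, mul_one]
  have hneven : (2 : ℤ) ∣ (n : ℤ) := by
    have : (n : ZMod 2) = 0 := by rw [← hpar1, hpar0]
    have h2 : ((n : ℤ) : ZMod 2) = 0 := by push_cast; exact this
    exact (ZMod.intCast_zmod_eq_zero_iff_dvd _ 2).mp h2
  -- row sum of the matrix identity at row i0
  have hA2 : ∑ j, (A ^ 2) i0 j = 1 := by
    simp only [pow_two, Matrix.mul_apply]
    rw [Finset.sum_comm]
    calc ∑ k, ∑ j, A i0 k * A k j = ∑ k, A i0 k * ∑ j, A k j := by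
          simp_rw [Finset.mul_sum]
      _ = ∑ k, A i0 k * 1 := by simp_rw [hnet]
      _ = 1 := by simp_rw [mul_one]; exact hnet i0
  rw [two_smul] at heq
  have hrow := congrArg (fun M : Matrix (Fin n) (Fin n) ℤ => ∑ j, M i0 j) heq
  simp only [Matrix.add_apply, Matrix.smul_apply, smul_eq_mul, Matrix.of_apply,
    Matrix.one_apply, Finset.sum_add_distrib, ← Finset.mul_sum] at hrow
  rw [hA2, hnet i0, hreg i0] at hrow
  simp only [Finset.sum_ite_eq, Finset.mem_univ, if_true, mul_one, Finset.sum_const,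
    Finset.card_univ, Fintype.card_fin, nsmul_eq_mul] at hrow
  -- hrow : 2 * 1 + (b - a) * 1 = (a + b - 2 * c) * 5 + 2 * c * n + 2 * (5 - c)
  obtain ⟨m, hm⟩ := hneven
  rcases hab with ⟨ha, hb⟩ | ⟨ha, hb⟩ <;> subst ha <;> subst hb <;>
  · have hkey : c * ((n : ℤ) - 6) = -9 ∨ c * ((n : ℤ) - 6) = -3 := by
      rw [hm] at hrow ⊢
      first
      | (left; linarith [hrow])
      | (right; linarith [hrow])
    have hdvd : (2 : ℤ) ∣ c * ((n : ℤ) - 6) := by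
      apply Dvd.dvd.mul_left
      omega
    rcases hkey with h | h <;> rw [h] at hdvd <;> omega
end
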